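/- arXiv:2411.05484 — 10 statements merged into one kernel-verified Lean document; each statement's English description precedes it below -/
import Mathlib

section
/- For a multiindex α = (α_1,...,α_n) of real numbers with α_n + 1 > 0, α_n + α_{n-1} + 2 > 0, ..., α_1 + ... + α_n + n > 0, the integral of t_1^{α_1} ⋯ t_n^{α_n} over the region {0 ≤ t_n ≤ ... ≤ t_1 ≤ 1} ⊂ ℝ^n equals 1 / ((α_n+1)(α_n+α_{n-1}+2) ⋯ (α_1+...+α_n+n)). -/
/-!
Induction on `n`, proving more generally that the integral over the ordered simplex of side
`c ≥ 0` is `c ^ (∑ αᵢ + n) / ∏ⱼ tailExponent α j`. Slicing off the largest coordinate `x = t₀`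
leaves the ordered simplex of side `x` in the remaining coordinates, so by Tonelli and the
induction hypothesis the integral becomes `∫₀ᶜ x ^ (∑ αᵢ + n - 1) dx / ∏ⱼ tailExponent (tail α) j`,
and the one-variable integral supplies the missing factor `∑ αᵢ + n`. Working with lower
Lebesgue integrals makes Tonelli available without integrability side conditions.
-/

open MeasureTheory Set
open scoped ENNReal

def orderedSimplex (n : ℕ) (c : ℝ) : Set (Fin n → ℝ) :=
  {t | (∀ i, t i ∈ Icc 0 c) ∧ Antitone t}

theorem isClosed_orderedSimplex (n : ℕ) (c : ℝ) : IsClosed (orderedSimplex n c) := by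
  simp only [orderedSimplex, ofPred_and, ofPred_forall, Antitone]
  exact (isClosed_iInter fun i => isClosed_Icc.preimage (continuous_apply i)).inter
    (isClosed_iInter fun i => isClosed_iInter fun j => isClosed_iInter fun _ =>
      isClosed_le (continuous_apply j) (continuous_apply i))

theorem orderedSimplex_zero (c : ℝ) : orderedSimplex 0 c = univ :=
  eq_univ_of_forall fun _ => ⟨finZeroElim, fun i => i.elim0⟩

theorem cons_mem_orderedSimplex_succ {n : ℕ} {c x : ℝ} {y : Fin n → ℝ} :
    (Fin.cons x y : Fin (n + 1) → ℝ) ∈ orderedSimplex (n + 1) c ↔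
      x ∈ Icc 0 c ∧ y ∈ orderedSimplex n x := by
  simp only [orderedSimplex, mem_ofPred_eq, Antitone, Fin.forall_fin_succ, Fin.cons_zero,
    Fin.cons_succ, Fin.succ_le_succ_iff, Fin.zero_le, mem_Icc, true_implies, le_refl,
    Fin.le_zero_iff, Fin.succ_ne_zero, false_implies, true_and]
  grind

theorem lintegral_fin_cons {α : Type*} [MeasureSpace α] [SigmaFinite (volume : Measure α)]
    {n : ℕ} {f : (Fin (n + 1) → α) → ℝ≥0∞} (hf : Measurable f) :
    ∫⁻ t, f t = ∫⁻ x, ∫⁻ y, f (Fin.cons x y) := by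
  let e := (MeasurableEquiv.piFinSuccAbove (fun _ : Fin (n + 1) => α) 0).symm
  have he : MeasurePreserving e := (volume_preserving_piFinSuccAbove _ 0).symm
  rw [← he.lintegral_comp hf, Measure.volume_eq_prod,
    lintegral_prod (fun p => f (e p)) (hf.comp e.measurable).aemeasurable]
  simp [e, MeasurableEquiv.piFinSuccAbove_symm_apply, Fin.consEquiv]

theorem setLIntegral_orderedSimplex_succ {n : ℕ} {c : ℝ} {f : (Fin (n + 1) → ℝ) → ℝ≥0∞}
    (hf : Measurable f) :
    ∫⁻ t in orderedSimplex (n + 1) c, f t =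
      ∫⁻ x in Icc 0 c, ∫⁻ y in orderedSimplex n x, f (Fin.cons x y) := by
  have hS := fun m c => (isClosed_orderedSimplex m c).measurableSet
  rw [← lintegral_indicator (hS _ _), lintegral_fin_cons (hf.indicator (hS _ _)),
    ← lintegral_indicator measurableSet_Icc]
  congr 1 with x
  by_cases hx : x ∈ Icc 0 c
  · rw [indicator_of_mem hx, ← lintegral_indicator (hS _ _)]
    congr 1 with y
    classical
    simp only [indicator_apply, cons_mem_orderedSimplex_succ, hx, true_and]
  · simp [cons_mem_orderedSimplex_succ, hx]

/-- The degree of homogeneity of the integral over the last coordinates `tⱼ, …, tₙ₋₁`. -/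
noncomputable def tailExponent {n : ℕ} (α : Fin n → ℝ) (j : Fin n) : ℝ :=
  ∑ i ∈ Finset.Ici j, α i + (n - (j : ℝ))

theorem tailExponent_zero {n : ℕ} (α : Fin (n + 1) → ℝ) :
    tailExponent α 0 = ∑ i, α i + (n + 1) := by
  simp [tailExponent]

theorem tailExponent_succ {n : ℕ} (α : Fin (n + 1) → ℝ) (j : Fin n) :
    tailExponent α j.succ = tailExponent (Fin.tail α) j := by
  simp [tailExponent, ← Fin.map_succEmb_Ici, Fin.tail]

theorem prod_tailExponent_succ {n : ℕ} (α : Fin (n + 1) → ℝ) :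
    ∏ j, tailExponent α j = (∑ i, α i + (n + 1)) * ∏ j, tailExponent (Fin.tail α) j := by
  simp only [Fin.prod_univ_succ, tailExponent_zero, tailExponent_succ]

theorem setLIntegral_Ioc_rpow_div {c p d : ℝ} (hc : 0 ≤ c) (hp : -1 < p) (hd : 0 ≤ d) :
    ∫⁻ x in Ioc 0 c, ENNReal.ofReal (x ^ p / d) = ENNReal.ofReal (c ^ (p + 1) / ((p + 1) * d)) := by
  have hint : IntegrableOn (fun x : ℝ => x ^ p / d) (Ioc 0 c) := by
    rw [← intervalIntegrable_iff_integrableOn_Ioc_of_le hc]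
    exact (intervalIntegral.intervalIntegrable_rpow' hp).div_const d
  rw [← ofReal_integral_eq_lintegral_ofReal hint, ← intervalIntegral.integral_of_le hc,
    intervalIntegral.integral_div, integral_rpow (.inl hp), Real.zero_rpow (by linarith), sub_zero,
    div_div]
  filter_upwards [ae_restrict_mem measurableSet_Ioc] with x hx
  exact div_nonneg (Real.rpow_nonneg hx.1.le p) hd

theorem setLIntegral_orderedSimplex_rpow {n : ℕ} (α : Fin n → ℝ)
    (hα : ∀ j, 0 < tailExponent α j) {c : ℝ} (hc : 0 ≤ c) :
    ∫⁻ t in orderedSimplex n c, ENNReal.ofReal (∏ j, t j ^ α j) =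
      ENNReal.ofReal (c ^ (∑ i, α i + n) / ∏ j, tailExponent α j) := by
  induction n generalizing c with
  | zero => simp [orderedSimplex_zero, volume_pi]
  | succ n ih =>
    have hα_tail (j : Fin n) : 0 < tailExponent (Fin.tail α) j := tailExponent_succ α j ▸ hα j.succ
    have hα_zero : 0 < ∑ i, α i + (n + 1) := tailExponent_zero α ▸ hα 0
    have hP : 0 ≤ ∏ j, tailExponent (Fin.tail α) j := Finset.prod_nonneg fun j _ => (hα_tail j).le
    calc ∫⁻ t in orderedSimplex (n + 1) c, ENNReal.ofReal (∏ j, t j ^ α j)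
        = ∫⁻ x in Icc 0 c, ENNReal.ofReal (x ^ α 0) *
            ∫⁻ y in orderedSimplex n x, ENNReal.ofReal (∏ j, y j ^ Fin.tail α j) := by
          rw [setLIntegral_orderedSimplex_succ (by fun_prop)]
          refine setLIntegral_congr_fun measurableSet_Icc fun x hx => ?_
          rw [← lintegral_const_mul' _ _ ENNReal.ofReal_ne_top]
          simp only [Fin.prod_univ_succ, Fin.cons_zero, Fin.cons_succ, Fin.tail,
            ENNReal.ofReal_mul (Real.rpow_nonneg hx.1 _)]
      _ = ∫⁻ x in Ioc 0 c,
            ENNReal.ofReal (x ^ (∑ i, α i + n) / ∏ j, tailExponent (Fin.tail α) j) := by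
          rw [Measure.restrict_congr_set Ioc_ae_eq_Icc.symm]
          refine setLIntegral_congr_fun measurableSet_Ioc fun x hx => ?_
          rw [ih (Fin.tail α) hα_tail hx.1.le, ← ENNReal.ofReal_mul (Real.rpow_nonneg hx.1.le _),
            mul_div_assoc', ← Real.rpow_add hx.1, Fin.sum_univ_succ, add_assoc]
          rfl
      _ = ENNReal.ofReal (c ^ (∑ i, α i + ↑(n + 1)) / ∏ j, tailExponent α j) := by
          rw [setLIntegral_Ioc_rpow_div hc (by linarith) hP, prod_tailExponent_succ]
          push_cast
          ring_nf

theorem setIntegral_orderedSimplex_rpow {n : ℕ} (α : Fin n → ℝ)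
    (hα : ∀ j, 0 < tailExponent α j) {c : ℝ} (hc : 0 ≤ c) :
    ∫ t in orderedSimplex n c, ∏ j, t j ^ α j = c ^ (∑ i, α i + n) / ∏ j, tailExponent α j := by
  have hnonneg : 0 ≤ᵐ[volume.restrict (orderedSimplex n c)] fun t => ∏ j, t j ^ α j := by
    filter_upwards [ae_restrict_mem (isClosed_orderedSimplex n c).measurableSet] with t ht
    exact Finset.prod_nonneg fun j _ => Real.rpow_nonneg (ht.1 j).1 _
  rw [integral_eq_lintegral_of_nonneg_ae hnonneg
    (Measurable.aestronglyMeasurable (by fun_prop)),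
    setLIntegral_orderedSimplex_rpow α hα hc, ENNReal.toReal_ofReal]
  exact div_nonneg (Real.rpow_nonneg hc _) (Finset.prod_nonneg fun j _ => (hα j).le)

/-- The integral of `t₁^{α₁} ⋯ tₙ^{αₙ}` over the ordered simplex
`{0 ≤ tₙ ≤ … ≤ t₁ ≤ 1}` equals
`1 / ((αₙ+1)(αₙ+αₙ₋₁+2) ⋯ (α₁+…+αₙ+n))`, provided each of those factors is
positive.  The factor associated to the index `j` (zero-based) is
`∑_{i ≥ j} αᵢ + (n - j)`. -/
theorem ordered_simplex_integral_rpow (n : ℕ) (α : Fin n → ℝ)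
    (hα : ∀ j : Fin n, 0 < (∑ i ∈ Finset.Ici j, α i) + (n - (j : ℝ))) :
    ∫ t in {t : Fin n → ℝ |
        (∀ i, 0 ≤ t i ∧ t i ≤ 1) ∧ ∀ i j : Fin n, i ≤ j → t j ≤ t i},
        ∏ j : Fin n, (t j) ^ (α j) =
      1 / ∏ j : Fin n, ((∑ i ∈ Finset.Ici j, α i) + (n - (j : ℝ))) := by
  have h := setIntegral_orderedSimplex_rpow α hα zero_le_one
  rwa [Real.one_rpow] at h
end

section
/- Let f be holomorphic on an open set U ⊂ ℂ, let x_0,...,x_n ∈ U be pairwise distinct, and let γ be a circle (or closed contour) in U encircling all the x_j exactly once. Then [x_0,...,x_n]f = (1/(2πi)) ∮_γ f(ζ) · ∏_{j=0}^n (ζ - x_j)^{-1} dζ. -/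
open Metric

/-- Divided differences, defined recursively. -/
noncomputable def divDiff (f : ℂ → ℂ) : (n : ℕ) → (Fin (n + 1) → ℂ) → ℂ
  | 0, x => f (x 0)
  | n + 1, x =>
      (divDiff f n (fun i => x i.castSucc) - divDiff f n (fun i => x i.succ)) /
        (x 0 - x (Fin.last (n + 1)))

lemma sub_ne_zero_of_sphere_ball {c : ℂ} {R : ℝ} {ζ w : ℂ}
    (hζ : ζ ∈ sphere c R) (hw : w ∈ ball c R) : ζ - w ≠ 0 := by
  rw [sub_ne_zero]
  rintro rfl
  rw [mem_sphere] at hζ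
  rw [mem_ball, hζ] at hw
  exact lt_irrefl _ hw

lemma integrand_circleIntegrable (U : Set ℂ) (f : ℂ → ℂ)
    (hf : DifferentiableOn ℂ f U)
    (c : ℂ) (R : ℝ) (hR : 0 < R) (hUc : closedBall c R ⊆ U)
    (m : ℕ) (y : Fin m → ℂ) (hy : ∀ j, y j ∈ ball c R) :
    CircleIntegrable (fun ζ => f ζ * ∏ j : Fin m, (ζ - y j)⁻¹) c R := by
  apply ContinuousOn.circleIntegrable hR.le
  apply ContinuousOn.mul
  · exact (hf.continuousOn).mono (fun z hz => hUc (sphere_subset_closedBall hz))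
  · apply continuousOn_finset_prod
    intro i _
    exact ((continuousOn_id.sub continuousOn_const)).inv₀
      (fun ζ hζ => sub_ne_zero_of_sphere_ball hζ (hy i))

/-- Contour integral formula for divided differences: if `f` is holomorphic on
an open set `U`, the points `x₀,…,xₙ` are pairwise distinct and lie inside a
positively oriented circle whose closed disk is contained in `U`, then
`[x₀,…,xₙ]f = (1/2πi) ∮ f(ζ) ∏ⱼ (ζ - xⱼ)⁻¹ dζ`. -/
theorem divDiff_contour_integral (n : ℕ) (U : Set ℂ) (hU : IsOpen U)
    (f : ℂ → ℂ) (hf : DifferentiableOn ℂ f U)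
    (c : ℂ) (R : ℝ) (hR : 0 < R) (hUc : closedBall c R ⊆ U)
    (x : Fin (n + 1) → ℂ) (hxin : ∀ j, x j ∈ ball c R)
    (hx : Function.Injective x) :
    divDiff f n x =
      (2 * Real.pi * Complex.I)⁻¹ *
        ∮ ζ in C(c, R), f ζ * ∏ j : Fin (n + 1), (ζ - x j)⁻¹ := by
  induction n with
  | zero =>
    have hfD : DiffContOnCl ℂ f (ball c R) := by
      apply DifferentiableOn.diffContOnCl
      rw [closure_ball c hR.ne']
      exact hf.mono hUc
    have hint := hfD.circleIntegral_sub_inv_smul (hxin 0)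
    have : (∮ ζ in C(c, R), f ζ * ∏ j : Fin 1, (ζ - x j)⁻¹)
        = ∮ ζ in C(c, R), (ζ - x 0)⁻¹ • f ζ := by
      apply circleIntegral.integral_congr hR.le
      intro ζ _
      simp [Fin.prod_univ_one, smul_eq_mul, mul_comm]
    rw [divDiff, this, hint, smul_eq_mul,
      inv_mul_cancel_left₀ Complex.two_pi_I_ne_zero]
  | succ n ih =>
    have hA := ih (fun i => x i.castSucc) (fun j => hxin _)
      (fun i j h => Fin.castSucc_injective _ (hx h))
    have hB := ih (fun i => x i.succ) (fun j => hxin _)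
      (fun i j h => Fin.succ_injective _ (hx h))
    have hx0last : x 0 - x (Fin.last (n + 1)) ≠ 0 := by
      rw [sub_ne_zero]
      intro h
      exact absurd (hx h) (by simp [Fin.ext_iff])
    have hIA := integrand_circleIntegrable U f hf c R hR hUc (n + 1)
      (fun i => x i.castSucc) (fun j => hxin _)
    have hIB := integrand_circleIntegrable U f hf c R hR hUc (n + 1)
      (fun i => x i.succ) (fun j => hxin _)
    rw [divDiff, hA, hB, div_eq_iff hx0last, ← mul_sub,
      ← circleIntegral.integral_sub hIA hIB]
    have key : (∮ z in C(c, R),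
          (f z * ∏ j : Fin (n + 1), (z - (fun i => x i.castSucc) j)⁻¹ -
            f z * ∏ j : Fin (n + 1), (z - (fun i => x i.succ) j)⁻¹))
        = (x 0 - x (Fin.last (n + 1))) •
            ∮ ζ in C(c, R), f ζ * ∏ j : Fin (n + 2), (ζ - x j)⁻¹ := by
      rw [← circleIntegral.integral_smul]
      apply circleIntegral.integral_congr hR.le
      intro ζ hζ
      have h0 : ζ - x 0 ≠ 0 := sub_ne_zero_of_sphere_ball hζ (hxin 0)
      have hl : ζ - x (Fin.last (n + 1)) ≠ 0 :=
        sub_ne_zero_of_sphere_ball hζ (hxin _)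
      have hPc : (∏ j : Fin (n + 1), (ζ - x j.castSucc)) ≠ 0 :=
        Finset.prod_ne_zero_iff.mpr fun j _ => sub_ne_zero_of_sphere_ball hζ (hxin _)
      have hPs : (∏ j : Fin (n + 1), (ζ - x j.succ)) ≠ 0 :=
        Finset.prod_ne_zero_iff.mpr fun j _ => sub_ne_zero_of_sphere_ball hζ (hxin _)
      have hcast : (∏ j : Fin (n + 1), (ζ - x j.castSucc)⁻¹)
          = (∏ j : Fin (n + 2), (ζ - x j)⁻¹) * (ζ - x (Fin.last (n + 1))) := by
        rw [Fin.prod_univ_castSucc (f := fun j : Fin (n+2) => (ζ - x j)⁻¹)]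
        field_simp [hPc]
      have hsucc : (∏ j : Fin (n + 1), (ζ - x j.succ)⁻¹)
          = (∏ j : Fin (n + 2), (ζ - x j)⁻¹) * (ζ - x 0) := by
        rw [Fin.prod_univ_succ (f := fun j : Fin (n+2) => (ζ - x j)⁻¹)]
        field_simp [hPs, mul_comm]
      simp only [smul_eq_mul]
      rw [hcast, hsucc]
      ring
    rw [key, smul_eq_mul]
    ring
end

section
/- For pairwise distinct nonzero complex numbers z_0,...,z_n and integer N ≥ n, the divided difference of the power function z ↦ z^N satisfies [z_0,...,z_n] id^N = ∑_{α ∈ ℕ^{n+1}, |α| = N-n} z_0^{α_0} ⋯ z_n^{α_n} (the complete homogeneous symmetric polynomial of degree N - n). -/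
open Finset Finset.Nat

section CompleteHomogeneous

variable {R : Type*} [CommSemiring R] {m : ℕ}

def completeHomogeneous (k : ℕ) (z : Fin m → R) : R :=
  ∑ α ∈ antidiagonalTuple m k, ∏ j, z j ^ α j

theorem sum_antidiagonalTuple_filter_eq_zero (k : ℕ) (z : Fin (m + 1) → R) (c : Fin (m + 1)) :
    ∑ β ∈ (antidiagonalTuple (m + 1) k).filter (fun β => β c = 0), ∏ j, z j ^ β j =
      completeHomogeneous k (c.removeNth z) := by
  refine sum_nbij' c.removeNth (fun α => c.insertNth 0 α) ?_ ?_ ?_ ?_ ?_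
  · intro β hβ
    simp only [mem_filter, mem_antidiagonalTuple] at hβ ⊢
    rw [← hβ.1, ← Fin.add_sum_removeNth c, hβ.2, zero_add]
  · intro α hα
    simp only [mem_filter, mem_antidiagonalTuple] at hα ⊢
    simp [hα]
  · intro β hβ
    rw [← (mem_filter.1 hβ).2, Fin.insertNth_self_removeNth]
  · intro α _
    simp
  · intro β hβ
    rw [← Fin.mul_prod_removeNth c, (mem_filter.1 hβ).2, pow_zero, one_mul]
    rfl

theorem sum_antidiagonalTuple_filter_ne_zero (k : ℕ) (z : Fin m → R) (c : Fin m) :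
    ∑ β ∈ (antidiagonalTuple m (k + 1)).filter (fun β => β c ≠ 0), ∏ j, z j ^ β j =
      z c * completeHomogeneous k z := by
  rw [completeHomogeneous, mul_sum]
  symm
  refine sum_nbij' (· + Pi.single c 1) (· - Pi.single c 1) ?_ ?_ ?_ ?_ ?_
  · intro α hα
    simp only [mem_filter, mem_antidiagonalTuple] at hα ⊢
    simp [sum_add_distrib, hα]
  · intro β hβ
    simp only [mem_filter, mem_antidiagonalTuple] at hβ ⊢
    have hle : Pi.single c 1 ≤ β := by
      intro j
      rcases eq_or_ne j c with rfl | hj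
      · simpa [Nat.one_le_iff_ne_zero] using hβ.2
      · simp [hj]
    have := hβ.1
    rw [← tsub_add_cancel_of_le hle] at this
    simpa [sum_add_distrib] using this
  · intro α _
    exact add_tsub_cancel_right α _
  · intro β hβ
    funext j
    have := (mem_filter.1 hβ).2
    rcases eq_or_ne j c with rfl | hj
    · simp only [Pi.add_apply, Pi.sub_apply, Pi.single_eq_same]
      omega
    · simp [hj]
  · intro α _
    have hsingle : ∏ j, z j ^ (Pi.single c 1 : Fin m → ℕ) j = z c := by
      rw [Fintype.prod_eq_single c fun j hj => by rw [Pi.single_eq_of_ne hj, pow_zero],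
        Pi.single_eq_same, pow_one]
    simp only [Pi.add_apply, pow_add, prod_mul_distrib, hsingle, mul_comm]

theorem completeHomogeneous_succ (k : ℕ) (z : Fin (m + 1) → R) (c : Fin (m + 1)) :
    completeHomogeneous (k + 1) z =
      completeHomogeneous (k + 1) (c.removeNth z) + z c * completeHomogeneous k z := by
  rw [← sum_antidiagonalTuple_filter_eq_zero, ← sum_antidiagonalTuple_filter_ne_zero,
    sum_filter_add_sum_filter_not]
  rfl

end CompleteHomogeneous

theorem completeHomogeneous_init_sub_tail {R : Type*} [CommRing R] {m : ℕ} (k : ℕ)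
    (z : Fin (m + 1) → R) :
    completeHomogeneous (k + 1) (Fin.init z) - completeHomogeneous (k + 1) (Fin.tail z) =
      (z 0 - z (Fin.last m)) * completeHomogeneous k z := by
  have h₀ := completeHomogeneous_succ k z 0
  have hₗ := completeHomogeneous_succ k z (Fin.last m)
  rw [Fin.removeNth_zero] at h₀
  rw [Fin.removeNth_last] at hₗ
  linear_combination h₀ - hₗ

theorem divDiff_pow_of_le_general (n N : ℕ) (hN : n ≤ N) (z : Fin (n + 1) → ℂ)
    (hinj : Function.Injective z) :
    divDiff (fun w => w ^ N) n z =
      ∑ α ∈ Finset.Nat.antidiagonalTuple (n + 1) (N - n),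
        ∏ j : Fin (n + 1), z j ^ α j := by
  change _ = completeHomogeneous (N - n) z
  induction n generalizing N with
  | zero => simp [divDiff, completeHomogeneous, antidiagonalTuple_one]
  | succ n ih =>
    have hk : N - n = N - (n + 1) + 1 := by omega
    have hne : z 0 - z (Fin.last (n + 1)) ≠ 0 :=
      sub_ne_zero.2 (hinj.ne (Fin.last_pos.ne))
    rw [divDiff, ih N (by omega) (fun i => z i.castSucc) (hinj.comp (Fin.castSucc_injective _)),
      ih N (by omega) (fun i => z i.succ) (hinj.comp (Fin.succ_injective _)), hk,
      div_eq_iff hne, mul_comm]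
    exact completeHomogeneous_init_sub_tail _ z

/-- For pairwise distinct nonzero `z₀,…,zₙ` and `N ≥ n`,
`[z₀,…,zₙ] id^N = ∑_{|α| = N-n} z^α`, the complete homogeneous symmetric
polynomial of degree `N - n` in `z₀,…,zₙ`. -/
theorem divDiff_pow_of_le (n N : ℕ) (hN : n ≤ N) (z : Fin (n + 1) → ℂ)
    (hz : ∀ j, z j ≠ 0) (hinj : Function.Injective z) :
    divDiff (fun w => w ^ N) n z =
      ∑ α ∈ Finset.Nat.antidiagonalTuple (n + 1) (N - n),
        ∏ j : Fin (n + 1), z j ^ α j :=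
  divDiff_pow_of_le_general n N hN z hinj
end

section
/- Let A be a unital ring, a, b_1,...,b_n ∈ A, and m ∈ ℕ. Then a^m · b_1 ⋯ b_n = ∑_{α ∈ ℕ^n, |α| ≤ m} (m! / (α! (m - |α|)!)) · ad_a^{α_1}(b_1) ⋯ ad_a^{α_n}(b_n) · a^{m - |α|}, where ad_a(x) = a·x - x·a and ad_a^{α_j} its α_j-fold iterate. -/
/-! Left multiplication by `a` is `ad_a + R_a` with commuting summands (`R_a` is right
multiplication), so the binomial theorem gives `aᵐ x = ∑ᵢ C(m, i) ad_aⁱ(x) a^(m-i)`. Applying this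
to `b₁` and then, by induction on `n`, to `a^(m-i) b₂ ⋯ bₙ` produces the coefficients, because
`C(m, i) · (m-i)! / (τ! (m-i-|τ|)!) = m! / (i! τ! (m-i-|τ|)!)`. -/

open Finset Nat

theorem pow_mul_eq_sum_choose_ad {A : Type*} [Ring A] (a x : A) (m : ℕ) :
    a ^ m * x = ∑ i ∈ range (m + 1),
      m.choose i • ((fun y => a * y - y * a)^[i] x * a ^ (m - i)) := by
  set L := LinearMap.mulLeft ℤ a
  set R := LinearMap.mulRight ℤ a
  have hcomm : Commute (L - R) R := (LinearMap.commute_mulLeft_right a a).sub_left (.refl R)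
  calc a ^ m * x = ((L - R + R) ^ m) x := by rw [sub_add_cancel, LinearMap.pow_mulLeft]; rfl
    _ = _ := by
      rw [hcomm.add_pow, LinearMap.sum_apply]
      refine sum_congr rfl fun i _ => ?_
      rw [(hcomm.pow_pow i (m - i)).eq, LinearMap.pow_mulRight, Module.End.mul_apply,
        Module.End.mul_apply, Module.End.natCast_apply, map_nsmul, map_nsmul,
        Module.End.pow_apply]
      rfl

theorem Finset.Nat.sum_antidiagonalTuple_succ {M : Type*} [AddCommMonoid M] (k n : ℕ)
    (f : (Fin (k + 1) → ℕ) → M) :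
    ∑ β ∈ antidiagonalTuple (k + 1) n, f β =
      ∑ p ∈ antidiagonal n, ∑ α ∈ antidiagonalTuple k p.2, f (Fin.cons p.1 α) := by
  rw [sum_sigma']
  refine sum_nbij' (fun β => (⟨(β 0, n - β 0), Fin.tail β⟩ : Σ _ : ℕ × ℕ, Fin k → ℕ))
    (fun σ => Fin.cons σ.1.1 σ.2) ?_ ?_ ?_ ?_ ?_ <;>
    simp only [mem_sigma, HasAntidiagonal.mem_antidiagonal, mem_antidiagonalTuple,
      Fin.sum_univ_succ, Fin.tail, Fin.cons_zero, Fin.cons_succ, Fin.cons_self_tail,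
      Sigma.forall, Prod.forall]
  · intro β hβ
    omega
  · rintro i j α ⟨rfl, rfl⟩
    rfl
  · simp
  · rintro i j α ⟨rfl, -⟩
    simp
  · simp

theorem Finset.Nat.sum_range_sum_antidiagonalTuple_succ {M : Type*} [AddCommMonoid M]
    (k m : ℕ) (f : ℕ → (Fin (k + 1) → ℕ) → M) :
    ∑ n ∈ range (m + 1), ∑ β ∈ antidiagonalTuple (k + 1) n, f n β =
      ∑ i ∈ range (m + 1), ∑ j ∈ range (m + 1 - i), ∑ α ∈ antidiagonalTuple k j,
        f (i + j) (Fin.cons i α) := by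
  simp_rw [sum_antidiagonalTuple_succ]
  rw [← sum_range_diag_flip]
  refine sum_congr rfl fun n _ => ?_
  rw [sum_antidiagonal_subst
      (f := fun p n => ∑ α ∈ antidiagonalTuple k p.2, f n (Fin.cons p.1 α)),
    sum_antidiagonal_eq_sum_range_succ fun i j =>
      ∑ α ∈ antidiagonalTuple k j, f (i + j) (Fin.cons i α)]

theorem Nat.factorial_div_eq_choose_mul {m i j P : ℕ} (hij : i + j ≤ m) (hP : P ∣ j !) :
    m ! / (i ! * P * (m - (i + j))!) = m.choose i * ((m - i)! / (P * (m - i - j)!)) := by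
  have hdvd : P * (m - i - j)! ∣ (m - i)! :=
    (mul_dvd_mul hP dvd_rfl).trans (factorial_mul_factorial_dvd_factorial (by omega))
  have hpos : 0 < i ! * P * (m - (i + j))! := by
    have := pos_of_dvd_of_pos hP j.factorial_pos
    positivity
  refine Nat.div_eq_of_eq_mul_left hpos ?_
  calc m ! = m.choose i * i ! * (m - i)! := (choose_mul_factorial_mul_factorial (by omega)).symm
    _ = m.choose i * i ! * (P * (m - i - j)! * ((m - i)! / (P * (m - i - j)!))) := by
      rw [Nat.mul_div_cancel' hdvd]
    _ = _ := by rw [Nat.sub_sub]; ring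

/-- In a unital ring, for `a, b₁,…,bₙ` and `m ∈ ℕ`,
`aᵐ b₁ ⋯ bₙ = ∑_{|α| ≤ m} (m!/(α!(m-|α|)!)) ad_a^{α₁}(b₁) ⋯ ad_a^{αₙ}(bₙ) a^{m-|α|}`.
The sum over `|α| ≤ m` is organized as a sum over `k = |α| ≤ m` and multiindices
`α` with `|α| = k`. -/
theorem pow_mul_list_eq_sum_ad (A : Type*) [Ring A] (n : ℕ) (a : A)
    (b : Fin n → A) (m : ℕ) :
    a ^ m * (List.ofFn b).prod =
      ∑ k ∈ Finset.range (m + 1), ∑ α ∈ Finset.Nat.antidiagonalTuple n k,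
        (m.factorial / ((∏ j, (α j).factorial) * (m - k).factorial)) •
          ((List.ofFn fun j => (fun x => a * x - x * a)^[α j] (b j)).prod *
            a ^ (m - k)) := by
  induction n generalizing m with
  | zero => simp [sum_range_succ', Nat.div_self m.factorial_pos]
  | succ n ih =>
    rw [Nat.sum_range_sum_antidiagonalTuple_succ, List.ofFn_succ, List.prod_cons, ← mul_assoc,
      pow_mul_eq_sum_choose_ad, sum_mul]
    refine sum_congr rfl fun i hi => ?_
    have him : i ≤ m := mem_range_succ_iff.mp hi
    rw [smul_mul_assoc, mul_assoc, ih, mul_sum, smul_sum, Nat.sub_add_comm him]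
    refine sum_congr rfl fun j hj => ?_
    rw [mul_sum, smul_sum]
    refine sum_congr rfl fun α hα => ?_
    simp only [Fin.prod_univ_succ, List.ofFn_succ, Fin.cons_zero, Fin.cons_succ, List.prod_cons]
    rw [Nat.factorial_div_eq_choose_mul (by have := mem_range.mp hj; omega)
        ((mem_antidiagonalTuple.mp hα) ▸ prod_factorial_dvd_factorial_sum _ _),
      mul_smul, mul_smul_comm, mul_assoc, Nat.sub_sub]
end

section
/- Let A be a unital Banach algebra, f holomorphic on an open set U ⊂ ℂ containing the spectra of commuting elements a_0,...,a_n, a_{n+1} ∈ A, and let γ be a contour in U encircling all spectra. Define, for b_1,...,b_n ∈ A, F_{a_0,...,a_n}(b_1,...,b_n) := (1/(2πi)) ∮_γ f(ζ) (ζ-a_0)^{-1} b_1 (ζ-a_1)^{-1} ⋯ b_n (ζ-a_n)^{-1} dζ. Then F_{a_0,...,a_{n-1},a_{n+1}}(b_1,...,b_n) - F_{a_0,...,a_{n-1},a_n}(b_1,...,b_n) = F_{a_0,...,a_n,a_{n+1}}(b_1,...,b_n·(a_{n+1}-a_n)), i.e., the noncommutative divided-difference recursion holds. -/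
open Metric

variable {A : Type*} [NormedRing A] [NormedAlgebra ℂ A] [CompleteSpace A]

/-- The noncommutative divided difference paired with elements `b₁,…,bₙ`:
`F_{a₀,…,aₙ}(b₁,…,bₙ) = (1/2πi) ∮ f(ζ) (ζ-a₀)⁻¹ b₁ (ζ-a₁)⁻¹ ⋯ bₙ (ζ-aₙ)⁻¹ dζ`,
the contour being the positively oriented circle of center `c` and radius `R`. -/
noncomputable def ncDivDiff (f : ℂ → ℂ) (c : ℂ) (R : ℝ) {n : ℕ}
    (a : Fin (n + 1) → A) (b : Fin n → A) : A :=
  (2 * Real.pi * Complex.I)⁻¹ •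
    ∮ ζ in C(c, R), f ζ •
      ((List.ofFn fun j : Fin n =>
          Ring.inverse (algebraMap ℂ A ζ - a j.castSucc) * b j).prod *
        Ring.inverse (algebraMap ℂ A ζ - a (Fin.last n)))

/-!
On the circle both `ζ - aₙ` and `ζ - aₙ₊₁` are invertible, and the integrands of the two sides
differ only in their last factor. The second resolvent identity
`(ζ - aₙ₊₁)⁻¹ - (ζ - aₙ)⁻¹ = (ζ - aₙ)⁻¹ (aₙ₊₁ - aₙ) (ζ - aₙ₊₁)⁻¹` turns the difference of the
integrands into the integrand of `F_{a₀,…,aₙ₊₁}(b₁,…,bₙ (aₙ₊₁ - aₙ))`; all integrands are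
continuous on the circle, so the integral is additive.
-/

open spectrum

section Algebraic

variable {R B : Type*} [CommRing R] [Ring B] [Algebra R B]

noncomputable def resolventChain {n : ℕ} (a b : Fin n → B) (ζ : R) : B :=
  (List.ofFn fun j => resolvent (a j) ζ * b j).prod

noncomputable def ncDivDiffKernel {n : ℕ} (a : Fin (n + 1) → B) (b : Fin n → B) (ζ : R) : B :=
  resolventChain (Fin.init a) b ζ * resolvent (a (Fin.last n)) ζ

theorem resolventChain_succ {n : ℕ} (a b : Fin (n + 1) → B) (ζ : R) :
    resolventChain a b ζ = resolventChain (Fin.init a) (Fin.init b) ζ *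
      (resolvent (a (Fin.last n)) ζ * b (Fin.last n)) := by
  rw [resolventChain, List.ofFn_succ', List.prod_concat]
  rfl

theorem ncDivDiffKernel_snoc {n : ℕ} (a : Fin (n + 1) → B) (b : Fin n → B) (x y : B) (ζ : R) :
    ncDivDiffKernel (Fin.snoc a x) (Fin.snoc b y) ζ = ncDivDiffKernel a b ζ * y * resolvent x ζ := by
  rw [ncDivDiffKernel, resolventChain_succ, ncDivDiffKernel]
  simp only [Fin.init_snoc, Fin.snoc_last, mul_assoc]

theorem ncDivDiffKernel_update_last {n : ℕ} (a : Fin (n + 1) → B) (b : Fin n → B) (x : B) (ζ : R) :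
    ncDivDiffKernel (Function.update a (Fin.last n) x) b ζ =
      resolventChain (Fin.init a) b ζ * resolvent x ζ := by
  rw [ncDivDiffKernel, Fin.init_update_last, Function.update_self]

theorem ncDivDiffKernel_update_last_sub {n : ℕ} (a : Fin (n + 1) → B) (b : Fin n → B) (x : B)
    {ζ : R} (ha : ζ ∈ resolventSet R (a (Fin.last n))) (hx : ζ ∈ resolventSet R x) :
    ncDivDiffKernel (Function.update a (Fin.last n) x) b ζ - ncDivDiffKernel a b ζ =
      ncDivDiffKernel (Fin.snoc a x) (Fin.snoc b (x - a (Fin.last n))) ζ := by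
  have hres : resolvent x ζ - resolvent (a (Fin.last n)) ζ =
      resolvent (a (Fin.last n)) ζ * (x - a (Fin.last n)) * resolvent x ζ := by
    rw [← neg_sub, resolvent_sub_resolvent ha hx, ← neg_sub x, mul_neg, neg_mul, neg_neg]
  rw [ncDivDiffKernel_update_last, ncDivDiffKernel_snoc, ncDivDiffKernel, ← mul_sub, hres,
    mul_assoc, mul_assoc, mul_assoc]

end Algebraic

section Analytic

variable {𝕜 B : Type*} [NontriviallyNormedField 𝕜] [NormedRing B] [NormedAlgebra 𝕜 B]
  [CompleteSpace B]

theorem continuousOn_resolvent (a : B) : ContinuousOn (resolvent a) (resolventSet 𝕜 a) :=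
  fun _ hk => (hasDerivAt_resolvent_const_left hk).continuousAt.continuousWithinAt

theorem continuousOn_resolventChain {n : ℕ} {s : Set 𝕜} (a b : Fin n → B)
    (ha : ∀ j, s ⊆ resolventSet 𝕜 (a j)) : ContinuousOn (resolventChain a b) s := by
  unfold resolventChain
  simp only [List.ofFn_eq_map]
  exact continuousOn_list_prod _ fun j _ =>
    ((continuousOn_resolvent (a j)).mono (ha j)).mul continuousOn_const

theorem continuousOn_ncDivDiffKernel {n : ℕ} {s : Set 𝕜} (a : Fin (n + 1) → B) (b : Fin n → B)
    (ha : ∀ j, s ⊆ resolventSet 𝕜 (a j)) : ContinuousOn (ncDivDiffKernel a b) s :=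
  (continuousOn_resolventChain _ b fun j => ha j.castSucc).mul
    ((continuousOn_resolvent _).mono (ha _))

end Analytic

section Circle

variable {B : Type*}

theorem sphere_subset_resolventSet [Ring B] [Algebra ℂ B] {c : ℂ} {R : ℝ} {x : B}
    (hx : spectrum ℂ x ⊆ ball c R) :
    sphere c R ⊆ resolventSet ℂ x :=
  fun _ hζ => Set.notMem_compl_iff.mp fun hmem => (mem_ball.mp (hx hmem)).ne (mem_sphere.mp hζ)

theorem ncDivDiff_eq_circleIntegral [NormedRing B] [NormedAlgebra ℂ B] (f : ℂ → ℂ) (c : ℂ)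
    (R : ℝ) {n : ℕ} (a : Fin (n + 1) → B) (b : Fin n → B) :
    ncDivDiff f c R a b =
      (2 * Real.pi * Complex.I)⁻¹ • ∮ ζ in C(c, R), f ζ • ncDivDiffKernel a b ζ :=
  rfl

theorem circleIntegrable_smul_ncDivDiffKernel [NormedRing B] [NormedAlgebra ℂ B]
    [CompleteSpace B] {f : ℂ → ℂ} {c : ℂ} {R : ℝ} (hR : 0 ≤ R) (hf : ContinuousOn f (sphere c R))
    {n : ℕ} (a : Fin (n + 1) → B) (b : Fin n → B) (ha : ∀ j, spectrum ℂ (a j) ⊆ ball c R) :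
    CircleIntegrable (fun ζ => f ζ • ncDivDiffKernel a b ζ) c R :=
  (hf.smul (continuousOn_ncDivDiffKernel a b fun j =>
    sphere_subset_resolventSet (ha j))).circleIntegrable hR

end Circle

theorem ncDivDiff_recursion_general (n : ℕ) (U : Set ℂ) (f : ℂ → ℂ)
    (hf : DifferentiableOn ℂ f U) (c : ℂ) (R : ℝ)
    (hUc : closedBall c R ⊆ U)
    (a : Fin (n + 1) → A) (a' : A) (b : Fin n → A)
    (hspec : ∀ j, spectrum ℂ (a j) ⊆ ball c R)
    (hspec' : spectrum ℂ a' ⊆ ball c R) :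
    ncDivDiff f c R (Function.update a (Fin.last n) a') b -
        ncDivDiff f c R a b =
      ncDivDiff f c R (Fin.snoc a a')
        (Fin.snoc b (a' - a (Fin.last n))) := by
  rcases le_or_gt R 0 with hR | hR
  · -- the ball is empty, and only the zero algebra has elements with empty spectrum
    have hempty : spectrum ℂ a' = ∅ := Set.subset_eq_empty hspec' (ball_eq_empty.mpr hR)
    have : Subsingleton A := not_nontrivial_iff_subsingleton.mp fun _ =>
      (spectrum.nonempty a').ne_empty hempty
    exact Subsingleton.elim _ _
  have hfc : ContinuousOn f (sphere c R) :=
    hf.continuousOn.mono (sphere_subset_closedBall.trans hUc)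
  have hspec_update : ∀ j, spectrum ℂ (Function.update a (Fin.last n) a' j) ⊆ ball c R := by
    intro j
    rcases eq_or_ne j (Fin.last n) with rfl | hj
    · simpa using hspec'
    · simpa [hj] using hspec j
  simp only [ncDivDiff_eq_circleIntegral, ← smul_sub, ← circleIntegral.integral_sub
    (circleIntegrable_smul_ncDivDiffKernel hR.le hfc _ b hspec_update)
    (circleIntegrable_smul_ncDivDiffKernel hR.le hfc a b hspec)]
  refine congrArg _ (circleIntegral.integral_congr hR.le fun ζ hζ => ?_)
  simp only [ncDivDiffKernel_update_last_sub a b a'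
    (sphere_subset_resolventSet (hspec _) hζ) (sphere_subset_resolventSet hspec' hζ)]

/-- Noncommutative divided-difference recursion (resolvent identity form):
`F_{a₀,…,aₙ₋₁,aₙ₊₁}(b₁,…,bₙ) - F_{a₀,…,aₙ}(b₁,…,bₙ)
  = F_{a₀,…,aₙ,aₙ₊₁}(b₁,…,bₙ·(aₙ₊₁-aₙ))`. -/
theorem ncDivDiff_recursion (n : ℕ) (U : Set ℂ) (hU : IsOpen U) (f : ℂ → ℂ)
    (hf : DifferentiableOn ℂ f U) (c : ℂ) (R : ℝ) (hR : 0 < R)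
    (hUc : closedBall c R ⊆ U)
    (a : Fin (n + 1) → A) (a' : A) (b : Fin n → A)
    (hcomm : ∀ i j, Commute (a i) (a j)) (hcomm' : ∀ i, Commute (a i) a')
    (hspec : ∀ j, spectrum ℂ (a j) ⊆ ball c R)
    (hspec' : spectrum ℂ a' ⊆ ball c R) :
    ncDivDiff f c R (Function.update a (Fin.last n) a') b -
        ncDivDiff f c R a b =
      ncDivDiff f c R (Fin.snoc a a')
        (Fin.snoc b (a' - a (Fin.last n))) :=
  ncDivDiff_recursion_general n U f hf c R hUc a a' b hspec hspec'
end

section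
/- Let A be a unital Banach algebra, a ∈ A, f holomorphic on an open neighborhood U of spec(a), and γ a contour in U encircling spec(a). Define the remainder R_N(a,b) := (1/(2πi)) ∮_γ f(ζ)((ζ-a)^{-1} b)^{N+1} (ζ-a-b)^{-1} dζ for b with spec(a+b) inside γ. Then there exist constants C_1, C_2 > 0 (depending on a, f, γ) such that ‖R_N(a,b)‖ ≤ C_1 (C_2 ‖b‖)^{N+1} for all sufficiently small b; in particular R_N(a,b) → 0 as N → ∞ when C_2‖b‖ < 1. -/
open Metric

/-- Estimate for the Taylor remainder of the holomorphic functional calculus: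
`R_N(a,b) = (1/2πi) ∮ f(ζ)((ζ-a)⁻¹ b)^{N+1} (ζ-a-b)⁻¹ dζ` satisfies
`‖R_N(a,b)‖ ≤ C₁ (C₂‖b‖)^{N+1}` for all sufficiently small `b`; in particular
`R_N(a,b) → 0` as `N → ∞` when `C₂‖b‖ < 1`. -/
theorem remainder_estimate (A : Type*) [NormedRing A] [NormedAlgebra ℂ A]
    [CompleteSpace A] (a : A) (U : Set ℂ) (hU : IsOpen U) (f : ℂ → ℂ)
    (hf : DifferentiableOn ℂ f U) (c : ℂ) (R : ℝ) (hR : 0 < R)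
    (hspec : spectrum ℂ a ⊆ ball c R) (hUc : closedBall c R ⊆ U) :
    ∃ C₁ C₂ ε : ℝ, 0 < C₁ ∧ 0 < C₂ ∧ 0 < ε ∧
      ∀ b : A, ‖b‖ < ε → ∀ N : ℕ,
        ‖(2 * Real.pi * Complex.I)⁻¹ •
            ∮ ζ in C(c, R), f ζ •
              ((Ring.inverse (algebraMap ℂ A ζ - a) * b) ^ (N + 1) *
                Ring.inverse (algebraMap ℂ A ζ - a - b))‖ ≤
          C₁ * (C₂ * ‖b‖) ^ (N + 1) := by
  -- Every point of the circle is outside the spectrum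
  have hunit : ∀ ζ ∈ sphere c R, IsUnit (algebraMap ℂ A ζ - a) := by
    intro ζ hζ
    rw [← spectrum.notMem_iff]
    intro h
    have h1 := hspec h
    rw [mem_ball] at h1
    rw [mem_sphere] at hζ
    exact absurd h1 (by rw [hζ]; exact lt_irrefl R)
  -- the resolvent is continuous on the sphere
  have hcont : ContinuousOn (fun ζ : ℂ => Ring.inverse (algebraMap ℂ A ζ - a))
      (sphere c R) := by
    intro ζ hζ
    have h1 : Continuous fun ζ : ℂ => algebraMap ℂ A ζ - a :=
      (continuous_algebraMap ℂ A).sub continuous_const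
    have h2 : ContinuousAt Ring.inverse (algebraMap ℂ A ζ - a) := by
      rw [← (hunit ζ hζ).unit_spec]; exact NormedRing.inverse_continuousAt _
    exact (ContinuousAt.comp (f := fun ζ : ℂ => algebraMap ℂ A ζ - a) h2
      h1.continuousAt).continuousWithinAt
  obtain ⟨M₀, hM₀⟩ := (isCompact_sphere c R).exists_bound_of_continuousOn hcont
  obtain ⟨Mf₀, hMf₀⟩ := (isCompact_sphere c R).exists_bound_of_continuousOn
    (hf.continuousOn.mono (fun z hz => hUc (sphere_subset_closedBall hz)))
  set M : ℝ := max M₀ 1 with hM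
  set Mf : ℝ := max Mf₀ 1 with hMf
  have hM1 : (1:ℝ) ≤ M := le_max_right _ _
  have hMf1 : (1:ℝ) ≤ Mf := le_max_right _ _
  have hMpos : (0:ℝ) < M := lt_of_lt_of_le one_pos hM1
  set K : ℝ := ‖(1:A)‖ + 1 with hK
  have hKpos : (0:ℝ) < K := by positivity
  refine ⟨R * Mf * K * M, M, (2*M)⁻¹, by positivity, hMpos, by positivity, ?_⟩
  intro b hb N
  -- basic estimates for ζ on the sphere
  have key : ∀ ζ ∈ sphere c R,
      ‖f ζ • ((Ring.inverse (algebraMap ℂ A ζ - a) * b) ^ (N + 1) *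
        Ring.inverse (algebraMap ℂ A ζ - a - b))‖ ≤
        Mf * ((M * ‖b‖) ^ (N+1) * (K * M)) := by
    intro ζ hζ
    set u : Aˣ := (hunit ζ hζ).unit with hu
    have huv : (u : A) = algebraMap ℂ A ζ - a := (hunit ζ hζ).unit_spec
    have hres : Ring.inverse (algebraMap ℂ A ζ - a) = ↑u⁻¹ := by
      rw [← huv, Ring.inverse_unit]
    have hresM : ‖(↑u⁻¹ : A)‖ ≤ M := by
      rw [← hres]; exact le_trans (hM₀ ζ hζ) (le_max_left _ _)
    set x : A := Ring.inverse (algebraMap ℂ A ζ - a) * b with hx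
    have hxnorm : ‖x‖ ≤ M * ‖b‖ := by
      rw [hx, hres]
      exact le_trans (norm_mul_le _ _) (mul_le_mul_of_nonneg_right hresM (norm_nonneg b))
    have hxhalf : ‖x‖ < 1/2 := by
      refine lt_of_le_of_lt hxnorm ?_
      have : M * ‖b‖ < M * (2*M)⁻¹ := by
        rcases eq_or_lt_of_le (norm_nonneg b) with h0 | h0
        · rw [← h0, mul_zero]; positivity
        · exact (mul_lt_mul_iff_right₀ hMpos).2 hb
      refine lt_of_lt_of_le this ?_
      rw [mul_inv, ← mul_assoc]
      rw [mul_comm M, mul_assoc, mul_inv_cancel₀ (ne_of_gt hMpos), mul_one]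
      norm_num
    have hxlt1 : ‖x‖ < 1 := hxhalf.trans (by norm_num)
    -- (ζ - a - b) = u * (1 - x)
    have hfact : algebraMap ℂ A ζ - a - b = ↑(u * Units.oneSub x hxlt1) := by
      have hcan : (algebraMap ℂ A ζ - a) * (↑u⁻¹ : A) = 1 := by rw [← huv]; exact u.mul_inv
      rw [Units.val_mul, Units.val_oneSub, mul_sub, mul_one, huv, hx, hres, ← mul_assoc,
        hcan, one_mul]
    have hinv2 : Ring.inverse (algebraMap ℂ A ζ - a - b) =
        ↑(Units.oneSub x hxlt1)⁻¹ * ↑u⁻¹ := by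
      rw [hfact, Ring.inverse_unit, mul_inv_rev, Units.val_mul]
    have hsum : ‖(↑(Units.oneSub x hxlt1)⁻¹ : A)‖ ≤ K := by
      have h1 : (↑(Units.oneSub x hxlt1)⁻¹ : A) = ∑' n : ℕ, x ^ n := rfl
      rw [h1]
      refine le_trans (tsum_geometric_le_of_norm_lt_one x hxlt1) ?_
      have : (1 - ‖x‖)⁻¹ ≤ 2 := by
        rw [inv_le_comm₀ (by linarith) (by norm_num)]
        linarith
      rw [hK]; linarith
    have hinv2norm : ‖Ring.inverse (algebraMap ℂ A ζ - a - b)‖ ≤ K * M := by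
      rw [hinv2]
      exact le_trans (norm_mul_le _ _)
        (mul_le_mul hsum hresM (norm_nonneg _) (le_of_lt hKpos))
    have hpow : ‖x ^ (N+1)‖ ≤ (M * ‖b‖) ^ (N+1) := by
      refine le_trans (norm_pow_le' x (Nat.succ_pos N)) ?_
      exact pow_le_pow_left₀ (norm_nonneg x) hxnorm _
    have hfb : ‖f ζ‖ ≤ Mf := le_trans (hMf₀ ζ hζ) (le_max_left _ _)
    calc ‖f ζ • (x ^ (N + 1) * Ring.inverse (algebraMap ℂ A ζ - a - b))‖
        = ‖f ζ‖ * ‖x ^ (N + 1) * Ring.inverse (algebraMap ℂ A ζ - a - b)‖ := norm_smul _ _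
      _ ≤ Mf * ((M * ‖b‖) ^ (N+1) * (K * M)) := by
          refine mul_le_mul hfb ?_ (norm_nonneg _) (by linarith)
          exact le_trans (norm_mul_le _ _)
            (mul_le_mul hpow hinv2norm (norm_nonneg _) (by positivity))
  have hint : ‖∮ ζ in C(c, R), f ζ •
      ((Ring.inverse (algebraMap ℂ A ζ - a) * b) ^ (N + 1) *
        Ring.inverse (algebraMap ℂ A ζ - a - b))‖ ≤
      2 * Real.pi * R * (Mf * ((M * ‖b‖) ^ (N+1) * (K * M))) :=
    circleIntegral.norm_integral_le_of_norm_le_const hR.le key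
  rw [norm_smul]
  have hsc : ‖(2 * Real.pi * Complex.I)⁻¹‖ = (2 * Real.pi)⁻¹ := by
    simp [Real.pi_pos.le, abs_of_pos Real.pi_pos]
  rw [hsc]
  calc (2 * Real.pi)⁻¹ * ‖∮ ζ in C(c, R), f ζ •
        ((Ring.inverse (algebraMap ℂ A ζ - a) * b) ^ (N + 1) *
          Ring.inverse (algebraMap ℂ A ζ - a - b))‖
      ≤ (2 * Real.pi)⁻¹ * (2 * Real.pi * R * (Mf * ((M * ‖b‖) ^ (N+1) * (K * M)))) := by
        exact mul_le_mul_of_nonneg_left hint (by positivity)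
    _ = R * Mf * K * M * (M * ‖b‖) ^ (N + 1) := by
        field_simp
end

section
/- Taylor expansion of the holomorphic functional calculus: Let A be a unital Banach algebra, f holomorphic on an open set U ⊂ ℂ, and a ∈ A with spec(a) ⊂ U. Then for all b ∈ A of sufficiently small norm, f(a+b) = ∑_{j=0}^∞ (1/(2πi)) ∮_γ f(ζ)(ζ-a)^{-1} b (ζ-a)^{-1} b ⋯ b (ζ-a)^{-1} dζ (the j-th term containing j factors of b and j+1 resolvent factors), with the series converging absolutely in norm; in particular the map a ↦ f(a) is analytic on {a : spec(a) ⊂ U}. -/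
open Metric

/-! For `‖b‖` small the Neumann series
`(ζ - a - b)⁻¹ = ∑ ((ζ - a)⁻¹ b) ^ j (ζ - a)⁻¹` converges uniformly on the circle: the resolvent
is continuous on the resolvent set, hence bounded by some `M` on the compact circle, so the `j`-th
term is dominated by `K M (M ‖b‖) ^ j`, where `K` bounds `f` on the circle. Dominated convergence
then integrates the series termwise, and the same geometric bound gives absolute summability of
the integrated terms. -/

theorem norm_pow_mul_le {A : Type*} [SeminormedRing A] (x y : A) :
    ∀ j : ℕ, ‖x ^ j * y‖ ≤ ‖x‖ ^ j * ‖y‖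
  | 0 => by simp
  | j + 1 =>
    calc ‖x ^ (j + 1) * y‖ = ‖x * (x ^ j * y)‖ := by rw [pow_succ', mul_assoc]
      _ ≤ ‖x‖ * (‖x‖ ^ j * ‖y‖) := (norm_mul_le _ _).trans (by gcongr; exact norm_pow_mul_le x y j)
      _ = ‖x‖ ^ (j + 1) * ‖y‖ := by ring

theorem norm_smul_pow_mul_le {𝕜 A : Type*} [NormedField 𝕜] [SeminormedRing A] [NormedSpace 𝕜 A]
    {k : 𝕜} {r b : A} {K M : ℝ} (hk : ‖k‖ ≤ K) (hr : ‖r‖ ≤ M) (j : ℕ) :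
    ‖k • ((r * b) ^ j * r)‖ ≤ K * M * (M * ‖b‖) ^ j :=
  calc ‖k • ((r * b) ^ j * r)‖ ≤ K * (‖r * b‖ ^ j * ‖r‖) := by
        rw [norm_smul]
        exact mul_le_mul hk (norm_pow_mul_le _ _ j) (norm_nonneg _) ((norm_nonneg k).trans hk)
    _ ≤ K * ((M * ‖b‖) ^ j * M) := by
        have hK : 0 ≤ K := (norm_nonneg k).trans hk
        have hM : 0 ≤ M := (norm_nonneg r).trans hr
        gcongr
        exact (norm_mul_le r b).trans (by gcongr)
    _ = K * M * (M * ‖b‖) ^ j := by ring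

theorem Ring.hasSum_inverse_sub {R : Type*} [NormedRing R] [HasSummableGeomSeries R] {x : R}
    (hx : IsUnit x) {b : R} (hb : ‖Ring.inverse x * b‖ < 1) :
    HasSum (fun j : ℕ => (Ring.inverse x * b) ^ j * Ring.inverse x) (Ring.inverse (x - b)) := by
  have hfactor : x - b = x * (1 - Ring.inverse x * b) := by
    rw [mul_sub, mul_one, ← mul_assoc, Ring.mul_inverse_cancel x hx, one_mul]
  rw [hfactor, Ring.inverse_mul (Or.inl hx)]
  exact (hasSum_geom_series_inverse _ hb).mul_right _

theorem spectrum.hasSum_resolvent_add {R A : Type*} [CommSemiring R] [NormedRing A]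
    [HasSummableGeomSeries A] [Algebra R A] {a : A} {z : R} (hz : z ∈ resolventSet R a) {b : A}
    (hb : ‖resolvent a z * b‖ < 1) :
    HasSum (fun j : ℕ => (resolvent a z * b) ^ j * resolvent a z) (resolvent (a + b) z) := by
  unfold resolvent
  rw [← sub_sub]
  exact Ring.hasSum_inverse_sub hz hb

theorem spectrum.continuousOn_resolvent {𝕜 A : Type*} [NontriviallyNormedField 𝕜] [NormedRing A]
    [NormedAlgebra 𝕜 A] [CompleteSpace A] (a : A) :
    ContinuousOn (resolvent a) (resolventSet 𝕜 a) :=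
  HasDerivAt.continuousOn fun _ hz => hasDerivAt_resolvent_const_left hz

theorem circleIntegral.hasSum_integral_of_norm_le {E : Type*} [NormedAddCommGroup E]
    [NormedSpace ℂ E] {c : ℂ} {R : ℝ} {F : ℕ → ℂ → E} {G : ℂ → E} {u : ℕ → ℝ}
    (hF : ∀ j, CircleIntegrable (F j) c R) (hFu : ∀ j, ∀ z ∈ sphere c |R|, ‖F j z‖ ≤ u j)
    (hu : Summable u) (hFG : ∀ z ∈ sphere c |R|, HasSum (F · z) (G z)) :
    HasSum (fun j => ∮ z in C(c, R), F j z) (∮ z in C(c, R), G z) := by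
  refine intervalIntegral.hasSum_integral_of_dominated_convergence (fun j _ => |R| * u j)
    (fun j => ((circleIntegrable_iff R).1 (hF j)).def'.1) (fun j => ?_)
    (.of_forall fun _ _ => hu.mul_left _) intervalIntegrable_const
    (.of_forall fun θ _ => (hFG _ (circleMap_mem_sphere' c R θ)).const_smul _)
  refine .of_forall fun θ _ => ?_
  rw [norm_smul, deriv_circleMap, norm_mul, Complex.norm_I, mul_one, norm_circleMap_zero]
  exact mul_le_mul_of_nonneg_left (hFu j _ (circleMap_mem_sphere' c R θ)) (abs_nonneg R)

theorem circleIntegral.summable_norm_two_pi_I_inv_smul_integral {E : Type*}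
    [NormedAddCommGroup E] [NormedSpace ℂ E] {c : ℂ} {R : ℝ} (hR : 0 ≤ R) {F : ℕ → ℂ → E}
    {u : ℕ → ℝ} (hFu : ∀ j, ∀ z ∈ sphere c R, ‖F j z‖ ≤ u j) (hu : Summable u) :
    Summable fun j => ‖(2 * Real.pi * Complex.I)⁻¹ • ∮ z in C(c, R), F j z‖ :=
  (hu.mul_left R).of_nonneg_of_le (fun _ => norm_nonneg _)
    fun j => norm_two_pi_i_inv_smul_integral_le_of_norm_le_const hR (hFu j)

theorem spectrum.summable_norm_circleIntegral_and_hasSum_resolvent_add {A : Type*} [NormedRing A]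
    [NormedAlgebra ℂ A] [CompleteSpace A] {a b : A} {f : ℂ → ℂ} {c : ℂ} {R K M : ℝ}
    (hR : 0 ≤ R) (hsph : sphere c R ⊆ resolventSet ℂ a) (hf : ContinuousOn f (sphere c R))
    (hK : ∀ ζ ∈ sphere c R, ‖f ζ‖ ≤ K) (hM : ∀ ζ ∈ sphere c R, ‖resolvent a ζ‖ ≤ M)
    (hM0 : 0 ≤ M) (hq : M * ‖b‖ < 1) :
    Summable (fun j : ℕ => ‖(2 * Real.pi * Complex.I)⁻¹ •
        ∮ ζ in C(c, R), f ζ • ((resolvent a ζ * b) ^ j * resolvent a ζ)‖) ∧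
      HasSum (fun j : ℕ => ∮ ζ in C(c, R), f ζ • ((resolvent a ζ * b) ^ j * resolvent a ζ))
        (∮ ζ in C(c, R), f ζ • resolvent (a + b) ζ) := by
  have hres : ContinuousOn (resolvent a) (sphere c R) :=
    (spectrum.continuousOn_resolvent a).mono hsph
  have hbound : ∀ j, ∀ ζ ∈ sphere c R,
      ‖f ζ • ((resolvent a ζ * b) ^ j * resolvent a ζ)‖ ≤ K * M * (M * ‖b‖) ^ j :=
    fun j ζ hζ => norm_smul_pow_mul_le (hK ζ hζ) (hM ζ hζ) j
  have hgeom : Summable fun j : ℕ => K * M * (M * ‖b‖) ^ j :=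
    (summable_geometric_of_lt_one (by positivity) hq).mul_left _
  have hneumann : ∀ ζ ∈ sphere c R, HasSum
      (fun j => f ζ • ((resolvent a ζ * b) ^ j * resolvent a ζ)) (f ζ • resolvent (a + b) ζ) :=
    fun ζ hζ => .const_smul (f ζ) <| spectrum.hasSum_resolvent_add (hsph hζ) <|
      (norm_mul_le _ _).trans_lt <|
        (mul_le_mul_of_nonneg_right (hM ζ hζ) (norm_nonneg b)).trans_lt hq
  refine ⟨circleIntegral.summable_norm_two_pi_I_inv_smul_integral hR hbound hgeom, ?_⟩
  exact circleIntegral.hasSum_integral_of_norm_le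
    (fun j => (hf.smul (((hres.mul continuousOn_const).pow j).mul hres)).circleIntegrable hR)
    (by rwa [abs_of_nonneg hR]) hgeom (by rwa [abs_of_nonneg hR])

theorem taylor_functional_calculus_general (A : Type*) [NormedRing A]
    [NormedAlgebra ℂ A] [CompleteSpace A] (a : A) (U : Set ℂ)
    (f : ℂ → ℂ) (hf : DifferentiableOn ℂ f U) (c : ℂ) (R : ℝ) (hR : 0 < R)
    (hspec : spectrum ℂ a ⊆ ball c R) (hUc : closedBall c R ⊆ U) :
    ∃ ε > (0 : ℝ), ∀ b : A, ‖b‖ < ε →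
      Summable (fun j : ℕ =>
        ‖(2 * Real.pi * Complex.I)⁻¹ •
            ∮ ζ in C(c, R), f ζ •
              ((Ring.inverse (algebraMap ℂ A ζ - a) * b) ^ j *
                Ring.inverse (algebraMap ℂ A ζ - a))‖) ∧
      (2 * Real.pi * Complex.I)⁻¹ •
          (∮ ζ in C(c, R), f ζ • Ring.inverse (algebraMap ℂ A ζ - (a + b))) =
        ∑' j : ℕ,
          (2 * Real.pi * Complex.I)⁻¹ •
            ∮ ζ in C(c, R), f ζ •
              ((Ring.inverse (algebraMap ℂ A ζ - a) * b) ^ j *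
                Ring.inverse (algebraMap ℂ A ζ - a)) := by
  have hsph : sphere c R ⊆ resolventSet ℂ a := fun ζ hζ =>
    spectrum.mem_resolventSet_iff.2 <| spectrum.notMem_iff.1 fun hmem =>
      (mem_ball.1 (hspec hmem)).ne (mem_sphere.1 hζ)
  have hfc : ContinuousOn f (sphere c R) :=
    hf.continuousOn.mono (sphere_subset_closedBall.trans hUc)
  obtain ⟨M, hM⟩ := (isCompact_sphere c R).exists_bound_of_continuousOn
    ((spectrum.continuousOn_resolvent a).mono hsph)
  obtain ⟨K, hK⟩ := (isCompact_sphere c R).exists_bound_of_continuousOn hfc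
  obtain ⟨ζ₀, hζ₀⟩ := (NormedSpace.sphere_nonempty (x := c)).2 hR.le
  have hM0 : 0 ≤ M := (norm_nonneg _).trans (hM ζ₀ hζ₀)
  refine ⟨(M + 1)⁻¹, by positivity, fun b hb => ?_⟩
  have hq : M * ‖b‖ < 1 :=
    calc M * ‖b‖ ≤ (M + 1) * ‖b‖ := by gcongr; linarith
      _ < (M + 1) * (M + 1)⁻¹ := by gcongr
      _ = 1 := mul_inv_cancel₀ (by positivity)
  obtain ⟨hsummable, hsum⟩ := spectrum.summable_norm_circleIntegral_and_hasSum_resolvent_add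
    hR.le hsph hfc hK hM hM0 hq
  -- `resolvent a ζ` is by definition `Ring.inverse (algebraMap ℂ A ζ - a)`.
  exact ⟨hsummable, (hsum.const_smul _).tsum_eq.symm⟩

/-- Taylor expansion of the holomorphic functional calculus: for `b` of
sufficiently small norm,
`f(a+b) = ∑_{j=0}^∞ (1/2πi) ∮ f(ζ)(ζ-a)⁻¹ (b (ζ-a)⁻¹)^j dζ`
(the `j`-th term containing `j` factors of `b` and `j+1` resolvent factors),
with absolute convergence in norm.  Both `f(a+b)` and the terms of the series
are given by the Cauchy integral over a circle encircling `spec a`. -/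
theorem taylor_functional_calculus (A : Type*) [NormedRing A]
    [NormedAlgebra ℂ A] [CompleteSpace A] (a : A) (U : Set ℂ) (hU : IsOpen U)
    (f : ℂ → ℂ) (hf : DifferentiableOn ℂ f U) (c : ℂ) (R : ℝ) (hR : 0 < R)
    (hspec : spectrum ℂ a ⊆ ball c R) (hUc : closedBall c R ⊆ U) :
    ∃ ε > (0 : ℝ), ∀ b : A, ‖b‖ < ε →
      Summable (fun j : ℕ =>
        ‖(2 * Real.pi * Complex.I)⁻¹ •
            ∮ ζ in C(c, R), f ζ •
              ((Ring.inverse (algebraMap ℂ A ζ - a) * b) ^ j *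
                Ring.inverse (algebraMap ℂ A ζ - a))‖) ∧
      (2 * Real.pi * Complex.I)⁻¹ •
          (∮ ζ in C(c, R), f ζ • Ring.inverse (algebraMap ℂ A ζ - (a + b))) =
        ∑' j : ℕ,
          (2 * Real.pi * Complex.I)⁻¹ •
            ∮ ζ in C(c, R), f ζ •
              ((Ring.inverse (algebraMap ℂ A ζ - a) * b) ^ j *
                Ring.inverse (algebraMap ℂ A ζ - a)) :=
  taylor_functional_calculus_general A a U f hf c R hR hspec hUc
end

section
/- Finite Dyson formula with remainder: Let A be a unital Banach algebra and a, b ∈ A. Then for every N ∈ ℕ, e^{a+b} = e^a + ∑_{n=1}^N ∫_{Δ_n} e^{s_0 a} b e^{s_1 a} ⋯ b e^{s_n a} ds + ∫_{Δ_{N+1}} e^{s_0 a} b ⋯ e^{s_N a} b e^{s_{N+1}(a+b)} ds. -/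
/-!
Duhamel's formula `e^{t(a+b)} - e^{ta} = ∫₀ᵗ e^{(t-u)a} b e^{u(a+b)} du`, applied to the last
factor `e^{s_{N+1}(a+b)}` of the `N`-th remainder integrand, splits the `N`-th remainder into the
`N`-th Dyson term plus an integral over `{(s, u) | s ∈ Δ_{N+1}, 0 ≤ u ≤ s_{N+1}}`. The shear
`(s, u) ↦ (s₁, …, s_{N+1} - u, u)` preserves Lebesgue measure and maps this region onto `Δ_{N+2}`,
so that integral is the `(N+1)`-st remainder. Induction on `N`, starting from Duhamel's formula
at `t = 1`.
-/

open MeasureTheory NormedSpace Set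

def cornerSimplex (n : ℕ) : Set (Fin n → ℝ) := {s | (∀ j, 0 ≤ s j) ∧ ∑ j, s j ≤ 1}

lemma isClosed_cornerSimplex (n : ℕ) : IsClosed (cornerSimplex n) := by
  simp only [cornerSimplex, ofPred_and, ofPred_forall]
  exact (isClosed_iInter fun j => isClosed_le continuous_const (continuous_apply j)).inter
    (isClosed_le (by fun_prop) continuous_const)

lemma isCompact_cornerSimplex (n : ℕ) : IsCompact (cornerSimplex n) := by
  refine (isCompact_univ_pi fun _ => isCompact_Icc (a := (0 : ℝ)) (b := 1)).of_isClosed_subset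
    (isClosed_cornerSimplex n) fun s hs => mem_univ_pi.2 fun j => ⟨hs.1 j, ?_⟩
  exact (Finset.single_le_sum (fun i _ => hs.1 i) (Finset.mem_univ j)).trans hs.2

lemma measurableSet_cornerSimplex (n : ℕ) : MeasurableSet (cornerSimplex n) :=
  (isClosed_cornerSimplex n).measurableSet

lemma Continuous.integrableOn_cornerSimplex {E : Type*} [NormedAddCommGroup E] {n : ℕ}
    {f : (Fin n → ℝ) → E} (hf : Continuous f) : IntegrableOn f (cornerSimplex n) :=
  hf.continuousOn.integrableOn_compact (isCompact_cornerSimplex n)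

section Shear

variable {n : ℕ}

lemma sum_snoc_sub_single (s : Fin (n + 1) → ℝ) (u : ℝ) :
    ∑ j, (Fin.snoc (s - Pi.single (Fin.last n) u) u : Fin (n + 2) → ℝ) j = ∑ j, s j := by
  simp [Fin.sum_univ_castSucc, Finset.sum_sub_distrib]

lemma snoc_sub_single_mem_cornerSimplex_iff (s : Fin (n + 1) → ℝ) (u : ℝ) :
    (Fin.snoc (s - Pi.single (Fin.last n) u) u : Fin (n + 2) → ℝ) ∈ cornerSimplex (n + 2) ↔
      s ∈ cornerSimplex (n + 1) ∧ u ∈ Icc 0 (s (Fin.last n)) := by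
  simp only [cornerSimplex, mem_ofPred_eq, sum_snoc_sub_single, Fin.forall_fin_succ',
    Fin.snoc_castSucc, Fin.snoc_last, Pi.sub_apply, mem_Icc, Pi.single_eq_same,
    Pi.single_eq_of_ne (Fin.castSucc_lt_last _).ne, sub_zero, sub_nonneg]
  constructor
  · rintro ⟨⟨⟨hinit, hlast⟩, hu⟩, hsum⟩
    exact ⟨⟨⟨hinit, hu.trans hlast⟩, hsum⟩, hu, hlast⟩
  · rintro ⟨⟨⟨hinit, -⟩, hsum⟩, hu, hlast⟩
    exact ⟨⟨⟨hinit, hlast⟩, hu⟩, hsum⟩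

lemma continuous_sub_single_last :
    Continuous fun p : ℝ × (Fin (n + 1) → ℝ) => p.2 - Pi.single (Fin.last n) p.1 :=
  continuous_snd.sub ((continuous_single _).comp continuous_fst)

variable (n) in
def snocShear : ℝ × (Fin (n + 1) → ℝ) ≃ᵐ (Fin (n + 2) → ℝ) :=
  MeasurableEquiv.trans
    { toEquiv := .prodShear (.refl ℝ) fun u => .subRight (Pi.single (Fin.last n) u)
      measurable_toFun := measurable_fst.prodMk continuous_sub_single_last.measurable
      measurable_invFun := measurable_fst.prodMk
        (continuous_snd.add ((continuous_single _).comp continuous_fst)).measurable }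
    (MeasurableEquiv.piFinSuccAbove (fun _ => ℝ) (Fin.last (n + 1))).symm

lemma snocShear_apply (u : ℝ) (s : Fin (n + 1) → ℝ) :
    snocShear n (u, s) = Fin.snoc (s - Pi.single (Fin.last n) u) u := by
  simp only [snocShear, MeasurableEquiv.trans_apply, MeasurableEquiv.piFinSuccAbove_symm_apply,
    Fin.insertNthEquiv_last]
  rfl

variable (n) in
lemma measurePreserving_snocShear :
    MeasurePreserving (snocShear n) (volume.prod volume) volume :=
  ((volume_preserving_piFinSuccAbove (fun _ => ℝ) (Fin.last (n + 1))).symm _).comp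
    ((MeasurePreserving.id volume).skew_product continuous_sub_single_last.measurable <|
      .of_forall fun u => (measurePreserving_sub_right volume (Pi.single (Fin.last n) u)).map_eq :)

variable (n) in
lemma preimage_snocShear_cornerSimplex :
    snocShear n ⁻¹' cornerSimplex (n + 2) =
      {p | p.2 ∈ cornerSimplex (n + 1) ∧ p.1 ∈ Icc 0 (p.2 (Fin.last n))} := by
  ext ⟨u, s⟩
  simp only [mem_preimage, snocShear_apply, snoc_sub_single_mem_cornerSimplex_iff, mem_ofPred_eq]

theorem setIntegral_cornerSimplex_succ {E : Type*} [NormedAddCommGroup E] [NormedSpace ℝ E]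
    {f : (Fin (n + 2) → ℝ) → E} (hf : IntegrableOn f (cornerSimplex (n + 2))) :
    ∫ x in cornerSimplex (n + 2), f x =
      ∫ s in cornerSimplex (n + 1), ∫ u in 0..s (Fin.last n),
        f (Fin.snoc (s - Pi.single (Fin.last n) u) u) := by
  have hΦ := measurePreserving_snocShear n
  set T := snocShear n ⁻¹' cornerSimplex (n + 2)
  have hT : MeasurableSet T := (measurableSet_cornerSimplex _).preimage (snocShear n).measurable
  have hint : Integrable (T.indicator (f ∘ snocShear n)) (volume.prod volume) :=
    (integrable_indicator_iff hT).2
      ((hΦ.integrableOn_comp_preimage (snocShear n).measurableEmbedding).2 hf)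
  have hinner : ∀ s, ∫ u, T.indicator (f ∘ snocShear n) (u, s) =
      (cornerSimplex (n + 1)).indicator
        (fun s => ∫ u in 0..s (Fin.last n), f (Fin.snoc (s - Pi.single (Fin.last n) u) u)) s := by
    intro s
    by_cases hs : s ∈ cornerSimplex (n + 1)
    · have hslice : ∀ u, T.indicator (f ∘ snocShear n) (u, s) = (Icc 0 (s (Fin.last n))).indicator
          (fun u => f (Fin.snoc (s - Pi.single (Fin.last n) u) u)) u := fun u => by
        simp only [indicator, T, preimage_snocShear_cornerSimplex, mem_ofPred_eq, hs, true_and,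
          Function.comp_apply, snocShear_apply]
      simp only [hslice, integral_indicator measurableSet_Icc, indicator_of_mem hs,
        intervalIntegral.integral_of_le (hs.1 _), integral_Icc_eq_integral_Ioc]
    · have hslice : ∀ u, T.indicator (f ∘ snocShear n) (u, s) = 0 := fun u =>
        indicator_of_notMem (by simp [T, preimage_snocShear_cornerSimplex, hs]) _
      simp [hslice, hs]
  calc ∫ x in cornerSimplex (n + 2), f x
      = ∫ p in T, (f ∘ snocShear n) p ∂(volume.prod volume) :=
        (hΦ.setIntegral_preimage_emb (snocShear n).measurableEmbedding _ _).symm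
    _ = ∫ s, ∫ u, T.indicator (f ∘ snocShear n) (u, s) := by
        rw [← integral_indicator hT, integral_prod_symm _ hint]
    _ = _ := by simp only [hinner, integral_indicator (measurableSet_cornerSimplex _)]

end Shear

theorem setIntegral_cornerSimplex_one {E : Type*} [NormedAddCommGroup E] [NormedSpace ℝ E]
    (f : (Fin 1 → ℝ) → E) :
    ∫ x in cornerSimplex 1, f x = ∫ u in (0 : ℝ)..1, f fun _ => u := by
  have h := (volume_preserving_funUnique (Fin 1) ℝ).symm
  have hpre : (MeasurableEquiv.funUnique (Fin 1) ℝ).symm ⁻¹' cornerSimplex 1 = Icc 0 1 := by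
    ext u
    simp [cornerSimplex]
  calc ∫ x in cornerSimplex 1, f x
      = ∫ u in Icc 0 1, f fun _ => u := by
        rw [← hpre]
        exact (h.setIntegral_preimage_emb (MeasurableEquiv.measurableEmbedding _) f _).symm
    _ = _ := by rw [intervalIntegral.integral_of_le zero_le_one, integral_Icc_eq_integral_Ioc]

lemma continuous_list_ofFn_prod {M X : Type*} [Monoid M] [TopologicalSpace M] [ContinuousMul M]
    [TopologicalSpace X] {n : ℕ} {g : Fin n → X → M} (hg : ∀ j, Continuous (g j)) :
    Continuous fun x => (List.ofFn fun j => g j x).prod := by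
  simpa only [List.ofFn_eq_map] using continuous_list_prod _ fun j _ => hg j

section Dyson

variable {A : Type*} [NormedRing A] [NormedAlgebra ℝ A] (a b : A)

noncomputable def dysonTerm (n : ℕ) (s : Fin (n + 1) → ℝ) : A :=
  exp ((1 - ∑ j, s j) • a) * (List.ofFn fun j : Fin (n + 1) => b * exp (s j • a)).prod

noncomputable def dysonRemainder (n : ℕ) (s : Fin (n + 1) → ℝ) : A :=
  exp ((1 - ∑ j, s j) • a) * (List.ofFn fun j : Fin n => b * exp (s j.castSucc • a)).prod *
    (b * exp (s (Fin.last n) • (a + b)))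

noncomputable def dysonPrefix (n : ℕ) (s : Fin (n + 1) → ℝ) : A :=
  exp ((1 - ∑ j, s j) • a) * (List.ofFn fun j : Fin n => b * exp (s j.castSucc • a)).prod * b

variable {n : ℕ}

lemma dysonTerm_eq_dysonPrefix_mul (s : Fin (n + 1) → ℝ) :
    dysonTerm a b n s = dysonPrefix a b n s * exp (s (Fin.last n) • a) := by
  simp only [dysonTerm, dysonPrefix, List.ofFn_succ', List.prod_concat, mul_assoc]

lemma dysonRemainder_eq_dysonPrefix_mul (s : Fin (n + 1) → ℝ) :
    dysonRemainder a b n s = dysonPrefix a b n s * exp (s (Fin.last n) • (a + b)) := by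
  simp only [dysonRemainder, dysonPrefix, mul_assoc]

lemma dysonRemainder_succ_snoc_sub_single (s : Fin (n + 1) → ℝ) (u : ℝ) :
    dysonRemainder a b (n + 1) (Fin.snoc (s - Pi.single (Fin.last n) u) u) =
      dysonPrefix a b n s * (exp ((s (Fin.last n) - u) • a) * b * exp (u • (a + b))) := by
  simp only [dysonRemainder, dysonPrefix, sum_snoc_sub_single, List.ofFn_succ', List.prod_concat,
    Fin.snoc_castSucc, Fin.snoc_last, Pi.sub_apply, Pi.single_eq_same,
    Pi.single_eq_of_ne (Fin.castSucc_lt_last _).ne, sub_zero, mul_assoc]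

variable [CompleteSpace A]

@[fun_prop]
lemma continuous_exp_of_normedAlgebra_real : Continuous (exp : A → A) :=
  continuous_iff_continuousAt.2 fun x => (exp_analytic (𝕂 := ℝ) x).continuousAt

theorem exp_smul_add_sub_exp_smul_eq_integral (t : ℝ) :
    exp (t • (a + b)) - exp (t • a) =
      ∫ u in (0 : ℝ)..t, exp ((t - u) • a) * b * exp (u • (a + b)) := by
  have hderiv : ∀ u : ℝ, HasDerivAt (fun u : ℝ => exp ((t - u) • a) * exp (u • (a + b)))
      (exp ((t - u) • a) * b * exp (u • (a + b))) u := by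
    intro u
    have hleft : HasDerivAt (fun u : ℝ => exp ((t - u) • a)) (-(exp ((t - u) • a) * a)) u := by
      simpa [Function.comp_def] using
        (hasDerivAt_exp_smul_const a (t - u)).scomp u ((hasDerivAt_id u).const_sub t)
    refine (hleft.mul (hasDerivAt_exp_smul_const' (a + b) u)).congr_deriv ?_
    simp only [mul_add, add_mul, mul_assoc, neg_mul, neg_add_cancel_left]
  rw [intervalIntegral.integral_eq_sub_of_hasDerivAt (fun u _ => hderiv u)
    (Continuous.intervalIntegrable (by fun_prop) _ _)]
  simp [exp_zero]

lemma continuous_dysonTerm : Continuous (dysonTerm a b n) := by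
  unfold dysonTerm
  exact (by fun_prop : Continuous _).mul (continuous_list_ofFn_prod fun j => by fun_prop)

lemma continuous_dysonRemainder : Continuous (dysonRemainder a b n) := by
  unfold dysonRemainder
  exact ((by fun_prop : Continuous _).mul (continuous_list_ofFn_prod fun j => by fun_prop)).mul
    (by fun_prop)

lemma setIntegral_dysonRemainder_zero :
    ∫ s in cornerSimplex 1, dysonRemainder a b 0 s = exp (a + b) - exp a := by
  have h := exp_smul_add_sub_exp_smul_eq_integral a b 1
  rw [one_smul, one_smul] at h
  rw [setIntegral_cornerSimplex_one, h]
  simp [dysonRemainder, mul_assoc]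

theorem setIntegral_dysonRemainder_succ (n : ℕ) :
    ∫ s in cornerSimplex (n + 2), dysonRemainder a b (n + 1) s =
      (∫ s in cornerSimplex (n + 1), dysonRemainder a b n s) -
        ∫ s in cornerSimplex (n + 1), dysonTerm a b n s := by
  have hR := (continuous_dysonRemainder a b (n := n)).integrableOn_cornerSimplex
  rw [setIntegral_cornerSimplex_succ (continuous_dysonRemainder a b).integrableOn_cornerSimplex,
    ← integral_sub hR (continuous_dysonTerm a b).integrableOn_cornerSimplex]
  refine setIntegral_congr_fun (measurableSet_cornerSimplex _) fun s _ => ?_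
  set t := s (Fin.last n)
  have hcomm := (ContinuousLinearMap.mul ℝ A (dysonPrefix a b n s)).intervalIntegral_comp_comm
    (Continuous.intervalIntegrable (μ := volume)
      (by fun_prop : Continuous fun u : ℝ => exp ((t - u) • a) * b * exp (u • (a + b))) 0 t)
  simp only [ContinuousLinearMap.mul_apply'] at hcomm
  simp only [dysonRemainder_succ_snoc_sub_single]
  rw [hcomm, ← exp_smul_add_sub_exp_smul_eq_integral, dysonRemainder_eq_dysonPrefix_mul,
    dysonTerm_eq_dysonPrefix_mul, mul_sub]

theorem exp_add_eq_sum_integral_dysonTerm_add_remainder (N : ℕ) :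
    exp (a + b) =
      exp a + (∑ n ∈ Finset.range N, ∫ s in cornerSimplex (n + 1), dysonTerm a b n s) +
        ∫ s in cornerSimplex (N + 1), dysonRemainder a b N s := by
  induction N with
  | zero => rw [setIntegral_dysonRemainder_zero]; simp
  | succ N ih => rw [ih, Finset.sum_range_succ, setIntegral_dysonRemainder_succ]; abel

end Dyson

/-- Finite Dyson formula with remainder: for every `N`,
`e^{a+b} = e^a + ∑_{n=1}^N ∫_{Δₙ} e^{s₀a} b e^{s₁a} ⋯ b e^{sₙa} ds
  + ∫_{Δ_{N+1}} e^{s₀a} b ⋯ e^{s_N a} b e^{s_{N+1}(a+b)} ds`,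
where `Δₙ = {sⱼ ≥ 0, ∑_{j=0}^n sⱼ = 1}` is parametrized by `(s₁,…,sₙ)` with
`s₀ = 1 - ∑ⱼ sⱼ`. -/
theorem dyson_finite (A : Type*) [NormedRing A] [NormedAlgebra ℂ A]
    [CompleteSpace A] (a b : A) (N : ℕ) :
    NormedSpace.exp (a + b) =
      NormedSpace.exp a +
        (∑ n ∈ Finset.range N,
          ∫ s in {s : Fin (n + 1) → ℝ | (∀ j, 0 ≤ s j) ∧ ∑ j, s j ≤ 1},
            NormedSpace.exp ((1 - ∑ j, s j) • a) *
              (List.ofFn fun j : Fin (n + 1) =>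
                b * NormedSpace.exp (s j • a)).prod) +
        ∫ s in {s : Fin (N + 1) → ℝ | (∀ j, 0 ≤ s j) ∧ ∑ j, s j ≤ 1},
          NormedSpace.exp ((1 - ∑ j, s j) • a) *
            (List.ofFn fun j : Fin N =>
              b * NormedSpace.exp (s j.castSucc • a)).prod *
            (b * NormedSpace.exp (s (Fin.last N) • (a + b))) :=
  exp_add_eq_sum_integral_dysonTerm_add_remainder a b N
end

section
/- For every multiindex β ∈ ℕ^n and every m ∈ ℕ with |β| ≤ m, the sum over multiindices α ∈ ℕ^n with β ≤ α (componentwise) and |α| ≤ m of the product of binomial coefficients ∏_j C(α_j, β_j) equals C(m + n, |β| + n). -/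
/-!
Terms with `β ≰ α` vanish, so the condition `β ≤ α` can be dropped. A slack coordinate
`α₀ = m - |α|` with `β₀ = 0` turns the sum over `|α| ≤ m` in `n` variables into a sum over
`|α| = m` in `n + 1` variables, and `∑_{|α| = k} ∏ⱼ C(αⱼ, βⱼ) = C(k + n, |β| + n)` for `n + 1`
variables follows by induction on `n` from the upper Vandermonde convolution
`∑_{a + b = k} C(a, r) C(b + t, s + t) = C(k + t + 1, r + s + t + 1)`.
-/

open Finset

theorem Nat.sum_antidiagonal_choose_mul_choose_add (t k r s : ℕ) :
    ∑ p ∈ antidiagonal k, p.1.choose r * (p.2 + t).choose (s + t) =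
      (k + t + 1).choose (r + s + t + 1) := by
  induction k generalizing r with
  | zero =>
    rcases r with _ | r
    · simp [Nat.choose_succ_succ t (s + t), Nat.choose_eq_zero_of_lt (by omega : t < s + t + 1)]
    · simp [Nat.choose_eq_zero_of_lt (by omega : t + 1 < r + 1 + s + t + 1)]
  | succ k ih =>
    rcases r with _ | r
    · specialize ih 0
      simp only [Nat.sum_antidiagonal_succ, Nat.choose_zero_right, one_mul, zero_add] at ih ⊢
      rw [ih, show k + 1 + t = k + t + 1 by omega]
      exact (Nat.choose_succ_succ (k + t + 1) (s + t)).symm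
    · rw [Nat.sum_antidiagonal_succ]
      conv_lhs => simp only [Nat.choose_zero_succ, zero_mul, zero_add, Nat.choose_succ_succ',
        add_mul, sum_add_distrib]
      rw [ih, ih, show k + 1 + t + 1 = k + t + 1 + 1 by omega,
        show r + 1 + s + t + 1 = r + s + t + 1 + 1 by omega, Nat.choose_succ_succ (k + t + 1)]

namespace Finset.Nat

theorem sum_antidiagonalTuple_succ_s18 {M : Type*} [AddCommMonoid M] (n k : ℕ)
    (f : (Fin (n + 1) → ℕ) → M) :
    ∑ α ∈ antidiagonalTuple (n + 1) k, f α =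
      ∑ p ∈ antidiagonal k, ∑ t ∈ antidiagonalTuple n p.2, f (Fin.cons p.1 t) := by
  change ((List.Nat.antidiagonalTuple (n + 1) k).map f).sum =
    ((List.Nat.antidiagonal k).map fun p =>
      ((List.Nat.antidiagonalTuple n p.2).map fun t => f (Fin.cons p.1 t)).sum).sum
  simp only [List.Nat.antidiagonalTuple, List.flatMap, List.map_flatten, List.sum_flatten,
    List.map_map, Function.comp_def]

theorem sum_range_sum_antidiagonalTuple {M : Type*} [AddCommMonoid M] (n m : ℕ)
    (f : (Fin n → ℕ) → M) :
    ∑ k ∈ range (m + 1), ∑ α ∈ antidiagonalTuple n k, f α =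
      ∑ α ∈ antidiagonalTuple (n + 1) m, f (Fin.tail α) := by
  rw [sum_antidiagonalTuple_succ_s18, ← Nat.sum_antidiagonal_swap]
  simp only [Prod.fst_swap, Prod.snd_swap, Fin.tail_cons]
  exact (Nat.sum_antidiagonal_eq_sum_range_succ
    (fun i _ => ∑ α ∈ antidiagonalTuple n i, f α) m).symm

theorem sum_antidiagonalTuple_prod_choose (n k : ℕ) (β : Fin (n + 1) → ℕ) :
    ∑ α ∈ antidiagonalTuple (n + 1) k, ∏ j, (α j).choose (β j) =
      (k + n).choose (∑ j, β j + n) := by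
  induction n generalizing k with
  | zero => simp
  | succ n ih =>
    have prod_cons (a : ℕ) (t : Fin (n + 1) → ℕ) :
        ∏ j, ((Fin.cons a t : Fin (n + 2) → ℕ) j).choose (β j) =
          a.choose (β 0) * ∏ j, (t j).choose (β j.succ) := by
      simp [Fin.prod_univ_succ]
    simp only [sum_antidiagonalTuple_succ_s18, prod_cons, ← mul_sum, ih,
      Nat.sum_antidiagonal_choose_mul_choose_add, Fin.sum_univ_succ β, ← add_assoc]

end Finset.Nat

theorem sum_choose_multiindex_le_general (n m : ℕ) (β : Fin n → ℕ) :
    (∑ k ∈ Finset.range (m + 1),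
        ∑ α ∈ (Finset.Nat.antidiagonalTuple n k).filter
          (fun α => ∀ j, β j ≤ α j),
          ∏ j, (α j).choose (β j)) =
      (m + n).choose ((∑ j, β j) + n) := by
  have drop_filter (k : ℕ) :
      ∑ α ∈ (Nat.antidiagonalTuple n k).filter (fun α => ∀ j, β j ≤ α j),
          ∏ j, (α j).choose (β j) =
        ∑ α ∈ Nat.antidiagonalTuple n k, ∏ j, (α j).choose (β j) :=
    sum_filter_of_ne fun α _ hne j =>
      not_lt.1 fun h => hne (prod_eq_zero (mem_univ j) (Nat.choose_eq_zero_of_lt h))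
  rw [sum_congr rfl fun k _ => drop_filter k, Nat.sum_range_sum_antidiagonalTuple]
  simpa [Fin.prod_univ_succ, Fin.tail] using
    Nat.sum_antidiagonalTuple_prod_choose n m (Fin.cons 0 β)

/-- For a multiindex `β ∈ ℕⁿ` with `|β| ≤ m`,
`∑_{β ≤ α, |α| ≤ m} ∏ⱼ C(αⱼ, βⱼ) = C(m+n, |β|+n)`.  The sum over `|α| ≤ m`
is organized as a sum over `k = |α| ≤ m` and multiindices with `|α| = k`. -/
theorem sum_choose_multiindex_le (n m : ℕ) (β : Fin n → ℕ)
    (hβ : ∑ j, β j ≤ m) :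
    (∑ k ∈ Finset.range (m + 1),
        ∑ α ∈ (Finset.Nat.antidiagonalTuple n k).filter
          (fun α => ∀ j, β j ≤ α j),
          ∏ j, (α j).choose (β j)) =
      (m + n).choose ((∑ j, β j) + n) :=
  sum_choose_multiindex_le_general n m β
end

section
/- For every multiindex β ∈ ℕ^n and every m ∈ ℕ with |β| ≤ m, the sum over multiindices α ∈ ℕ^n with β ≤ α (componentwise) and |α| = m of ∏_j C(α_j, β_j) equals C(m + n - 1, |β| + n - 1). -/
/-!
Since `∑ₐ C(a, b) Xᵃ = Xᵇ / (1 - X)ᵇ⁺¹`, the sum is the coefficient of `Xᵐ` in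
`X^|β| / (1 - X)^(|β| + n)`, which is `C(m + n - 1, |β| + n - 1)`. The constraint `β ≤ α` is
vacuous, because `C(a, b) = 0` for `a < b`.
-/

open Finset PowerSeries

theorem PowerSeries.coeff_prod_fin {R : Type*} [CommSemiring R] {n : ℕ} (f : Fin n → R⟦X⟧)
    (d : ℕ) :
    coeff d (∏ j, f j) = ∑ α ∈ Nat.antidiagonalTuple n d, ∏ j, coeff (α j) (f j) := by
  rw [coeff_prod]
  refine sum_equiv Finsupp.equivFunOnFinite (fun l => ?_) (fun _ _ => rfl)
  simp [Nat.mem_antidiagonalTuple]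

theorem PowerSeries.mk_choose_eq_X_pow_mul_mk_one_pow {R : Type*} [CommRing R] (b : ℕ) :
    (mk fun a => (a.choose b : R)) = X ^ b * (mk 1) ^ (b + 1) := by
  ext a
  rw [mk_one_pow_eq_mk_choose_add, coeff_X_pow_mul', coeff_mk]
  split_ifs with hba
  · rw [coeff_mk, Nat.add_sub_cancel' hba]
  · rw [Nat.choose_eq_zero_of_lt (not_le.mp hba), Nat.cast_zero]

theorem Finset.Nat.sum_antidiagonalTuple_prod_choose_s19 (n m : ℕ) (β : Fin (n + 1) → ℕ) :
    ∑ α ∈ Nat.antidiagonalTuple (n + 1) m, ∏ j, (α j).choose (β j) =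
      (m + n).choose (∑ j, β j + n) := by
  set b := ∑ j, β j
  have hprod : ∏ j, (PowerSeries.mk fun a => (a.choose (β j) : ℤ)) =
      X ^ b * (PowerSeries.mk 1) ^ (b + n + 1) := by
    simp only [mk_choose_eq_X_pow_mul_mk_one_pow, prod_mul_distrib, prod_pow_eq_pow_sum,
      sum_add_distrib]
    simp [b, add_assoc]
  apply Nat.cast_injective (R := ℤ)
  calc ((∑ α ∈ Nat.antidiagonalTuple (n + 1) m, ∏ j, (α j).choose (β j) : ℕ) : ℤ)
      = coeff m (∏ j, (PowerSeries.mk fun a => (a.choose (β j) : ℤ))) := by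
        simp [coeff_prod_fin]
    _ = coeff (m + n) (X ^ (b + n) * (PowerSeries.mk 1) ^ (b + n + 1)) := by
        rw [hprod, pow_add X b n, mul_comm (X ^ b) (X ^ n), mul_assoc, coeff_X_pow_mul]
    _ = (m + n).choose (b + n) := by
        rw [← mk_choose_eq_X_pow_mul_mk_one_pow, coeff_mk]

theorem sum_choose_multiindex_eq_general (n m : ℕ) (hn : 1 ≤ n) (β : Fin n → ℕ) :
    (∑ α ∈ (Finset.Nat.antidiagonalTuple n m).filter
        (fun α => ∀ j, β j ≤ α j),
        ∏ j, (α j).choose (β j)) =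
      (m + n - 1).choose ((∑ j, β j) + n - 1) := by
  obtain ⟨n, rfl⟩ := Nat.exists_eq_add_of_le' hn
  have hfilter : ∀ α ∈ Nat.antidiagonalTuple (n + 1) m,
      ∏ j, (α j).choose (β j) ≠ 0 → ∀ j, β j ≤ α j := fun α _ h j =>
    Nat.choose_ne_zero_iff.mp (prod_ne_zero_iff.mp h j (mem_univ j))
  rw [sum_filter_of_ne hfilter, Nat.sum_antidiagonalTuple_prod_choose_s19]
  simp only [← add_assoc, Nat.add_sub_cancel]

/-- For `n ≥ 1` and a multiindex `β ∈ ℕⁿ` with `|β| ≤ m`,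
`∑_{β ≤ α, |α| = m} ∏ⱼ C(αⱼ, βⱼ) = C(m+n-1, |β|+n-1)`. -/
theorem sum_choose_multiindex_eq (n m : ℕ) (hn : 1 ≤ n) (β : Fin n → ℕ)
    (hβ : ∑ j, β j ≤ m) :
    (∑ α ∈ (Finset.Nat.antidiagonalTuple n m).filter
        (fun α => ∀ j, β j ≤ α j),
        ∏ j, (α j).choose (β j)) =
      (m + n - 1).choose ((∑ j, β j) + n - 1) :=
  sum_choose_multiindex_eq_general n m hn β
end
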